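/- arXiv:2405.19946 — 4 statements merged into one kernel-verified Lean document; each statement's English description precedes it below -/
import Mathlib

section
/- Let α, β, γ be real numbers with α ≠ 0 and α + β + γ = 1. Set q* = (β + γ − α)/(2α), p* = (α² + β² − γ²)/(2α²), and δ = 1/(4α²) − 1/(2α) − 1. Define U1(q1,q2,p) = α(q1·q2 + (q2 − q1)·p + q1 − 1) + β(q1·q2 + q2 − 1) − γ(q1·q2 + q1 − 1), U2(q1,q2,p) = α(q1·q2 + (q2 − q1)·p + q1 − 1) − β(q1·q2 + q2 − 1) + γ(q1·q2 + q1 − 1), and U3(q1,q2,p) = −α(q1·q2 + (q2 − q1)·p + q1 − 1) − β(q1·q2 + q2 − 1) − γ(q1·q2 + q1 − 1). Then U1(q*,q*,p*) = δ·(1 − 2γ), U2(q*,q*,p*) = δ·(1 − 2β), and U3(q*,q*,p*) = −δ. -/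
theorem stmt_5 (α β γ : ℝ) (hα : α ≠ 0) (hsum : α + β + γ = 1)
    (qs ps δ : ℝ)
    (hq : qs = (β + γ - α) / (2 * α))
    (hp : ps = (α ^ 2 + β ^ 2 - γ ^ 2) / (2 * α ^ 2))
    (hδ : δ = 1 / (4 * α ^ 2) - 1 / (2 * α) - 1)
    (U1 U2 U3 : ℝ → ℝ → ℝ → ℝ)
    (hU1 : ∀ q1 q2 p, U1 q1 q2 p =
      α * (q1 * q2 + (q2 - q1) * p + q1 - 1) + β * (q1 * q2 + q2 - 1) - γ * (q1 * q2 + q1 - 1))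
    (hU2 : ∀ q1 q2 p, U2 q1 q2 p =
      α * (q1 * q2 + (q2 - q1) * p + q1 - 1) - β * (q1 * q2 + q2 - 1) + γ * (q1 * q2 + q1 - 1))
    (hU3 : ∀ q1 q2 p, U3 q1 q2 p =
      -(α * (q1 * q2 + (q2 - q1) * p + q1 - 1)) - β * (q1 * q2 + q2 - 1) - γ * (q1 * q2 + q1 - 1)) :
    U1 qs qs ps = δ * (1 - 2 * γ) ∧
    U2 qs qs ps = δ * (1 - 2 * β) ∧
    U3 qs qs ps = -δ := by
  have hγ : γ = 1 - α - β := by linarith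
  subst hq hp hδ hγ
  refine ⟨?_, ?_, ?_⟩
  · rw [hU1]; field_simp; ring
  · rw [hU2]; field_simp; ring
  · rw [hU3]; field_simp; ring
end

section
/- Let α, β, γ be real numbers with α ≠ 0 and α + β + γ = 1, and set q = (β + γ − α)/(2α), p = (α² + β² − γ²)/(2α²), and δ = 1/(4α²) − 1/(2α) − 1. Then −α(1 − q) − α·q·p + β(1 − q) + β·q − γ(1 − q) = δ·(1 − 2β) and −α(1 − q)(1 − p) + α·q − β·q − γ(1 − q) + γ·q = δ·(1 − 2β); in particular the two left-hand expressions are equal. -/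
theorem stmt_6 (α β γ : ℝ) (hα : α ≠ 0) (hsum : α + β + γ = 1)
    (q p δ : ℝ)
    (hq : q = (β + γ - α) / (2 * α))
    (hp : p = (α ^ 2 + β ^ 2 - γ ^ 2) / (2 * α ^ 2))
    (hδ : δ = 1 / (4 * α ^ 2) - 1 / (2 * α) - 1) :
    -(α * (1 - q)) - α * q * p + β * (1 - q) + β * q - γ * (1 - q) = δ * (1 - 2 * β) ∧
    -(α * (1 - q) * (1 - p)) + α * q - β * q - γ * (1 - q) + γ * q = δ * (1 - 2 * β) := by
  have hγ : γ = 1 - α - β := by linarith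
  subst hq hp hδ hγ
  constructor <;> field_simp <;> ring
end

section
/- Let α, β, γ be real numbers with α ≠ 0 and α + β + γ = 1, and set q = (β + γ − α)/(2α), p = (α² + β² − γ²)/(2α²), and δ = 1/(4α²) − 1/(2α) − 1. Then α(p·q − 1) + β(q − 1) + γ = δ·(1 − 2γ) and α(p·q − p + q) + β(2q − 1) − γ·q = δ·(1 − 2γ); in particular the two left-hand expressions are equal. -/
theorem stmt_7 (α β γ : ℝ) (hα : α ≠ 0) (hsum : α + β + γ = 1)
    (q p δ : ℝ)
    (hq : q = (β + γ - α) / (2 * α))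
    (hp : p = (α ^ 2 + β ^ 2 - γ ^ 2) / (2 * α ^ 2))
    (hδ : δ = 1 / (4 * α ^ 2) - 1 / (2 * α) - 1) :
    α * (p * q - 1) + β * (q - 1) + γ = δ * (1 - 2 * γ) ∧
    α * (p * q - p + q) + β * (2 * q - 1) - γ * q = δ * (1 - 2 * γ) := by
  have hβ : β = 1 - α - γ := by linarith
  subst hq hp hδ hβ
  constructor <;> field_simp <;> ring
end

section
/- Let α, β, γ be real numbers satisfying α + β + γ = 1, 1/4 ≤ α ≤ 1/2, and (1 − 2α)/(2 − 2α) ≤ γ ≤ (2α² − 2α + 1)/(2 − 2α). Then 0 ≤ (β + γ − α)/(2α) ≤ 1 and 0 ≤ (α² + β² − γ²)/(2α²) ≤ 1. -/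
theorem stmt_11 (α β γ : ℝ) (hsum : α + β + γ = 1)
    (hα : 1 / 4 ≤ α ∧ α ≤ 1 / 2)
    (hγ : (1 - 2 * α) / (2 - 2 * α) ≤ γ ∧ γ ≤ (2 * α ^ 2 - 2 * α + 1) / (2 - 2 * α)) :
    (0 ≤ (β + γ - α) / (2 * α) ∧ (β + γ - α) / (2 * α) ≤ 1) ∧
    (0 ≤ (α ^ 2 + β ^ 2 - γ ^ 2) / (2 * α ^ 2) ∧ (α ^ 2 + β ^ 2 - γ ^ 2) / (2 * α ^ 2) ≤ 1) := by
  obtain ⟨hα1, hα2⟩ := hα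
  obtain ⟨hγ1, hγ2⟩ := hγ
  have hden : (0:ℝ) < 2 - 2 * α := by linarith
  have hαpos : (0:ℝ) < α := by linarith
  have h1 : 1 - 2 * α ≤ γ * (2 - 2 * α) := (div_le_iff₀ hden).mp hγ1
  have h2 : γ * (2 - 2 * α) ≤ 2 * α ^ 2 - 2 * α + 1 := (le_div_iff₀ hden).mp hγ2
  have hβ : β = 1 - α - γ := by linarith
  subst hβ
  have h2α : (0:ℝ) < 2 * α := by linarith
  have h2α2 : (0:ℝ) < 2 * α ^ 2 := by positivity
  refine ⟨⟨div_nonneg (by nlinarith) h2α.le, (div_le_one h2α).mpr (by nlinarith)⟩,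
    ⟨div_nonneg (by nlinarith) h2α2.le, (div_le_one h2α2).mpr (by nlinarith)⟩⟩
end
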